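/- Let f, g and h be entire functions given by everywhere absolutely convergent vector valued Dirichlet series, and let p ≥ 0, q ≥ 0, m ≥ 0 be integers. Assume 0 < λ_h^{(m,q)}(f) ≤ ρ_h^{(m,q)}(f) < +∞ and 0 < λ_h^{(m,p)}(g) ≤ ρ_h^{(m,p)}(g) < +∞. Then ρ_g^{(p,q)}(f) · ρ_f^{(q,p)}(g) ≥ 1. Moreover, if f is of regular relative (m,q) Ritt growth with respect to h and g is of regular relative (m,p) Ritt growth with respect to h, then ρ_g^{(p,q)}(f) · ρ_f^{(q,p)}(g) = 1. -/

import Mathlib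

open Filter Topology

noncomputable section

/-- An entire function given by an everywhere absolutely convergent
vector valued Dirichlet series, with coefficients in a Banach space `E`. -/
structure VVDS (E : Type*) [NormedAddCommGroup E] [NormedSpace ℂ E] [CompleteSpace E] where
  a : ℕ → E
  lam : ℕ → ℝ
  lam_pos : ∀ n, 0 < lam n
  lam_strictMono : StrictMono lam
  lam_tendsto : Tendsto lam atTop atTop
  log_index_bound : ∃ D : ℝ, ∀ᶠ n : ℕ in atTop, Real.log (n : ℝ) / lam n ≤ D
  coeff_decay : Tendsto (fun n => Real.log ‖a n‖ / lam n) atTop atBot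
  abs_conv : ∀ s : ℂ, Summable (fun n => Real.exp (s.re * lam n) * ‖a n‖)

variable {E F G : Type*} [NormedAddCommGroup E] [NormedSpace ℂ E] [CompleteSpace E]
  [NormedAddCommGroup F] [NormedSpace ℂ F] [CompleteSpace F]
  [NormedAddCommGroup G] [NormedSpace ℂ G] [CompleteSpace G]

/-- The entire function defined by the vector valued Dirichlet series. -/
def VVDS.toFun (f : VVDS E) (s : ℂ) : E := ∑' n, Complex.exp (s * (f.lam n : ℂ)) • f.a n

/-- The maximum modulus function `M_f(σ) = sup_t ‖f(σ+it)‖`. -/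
def VVDS.M (f : VVDS E) (σ : ℝ) : ℝ := ⨆ t : ℝ, ‖f.toFun ((σ : ℂ) + (t : ℂ) * Complex.I)‖

/-- The inverse function of the maximum modulus function. -/
def VVDS.Minv (f : VVDS E) (y : ℝ) : ℝ := sInf {σ : ℝ | y ≤ f.M σ}

/-- The (p,q)-th relative Ritt order of `f` with respect to `g`. -/
def relRittOrder (p q : ℕ) (f : VVDS E) (g : VVDS F) : EReal :=
  limsup (fun σ : ℝ =>
    ((Real.log^[p] (g.Minv (f.M σ)) / Real.log^[q] σ : ℝ) : EReal)) atTop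

/-- The (p,q)-th relative Ritt lower order of `f` with respect to `g`. -/
def relRittLowerOrder (p q : ℕ) (f : VVDS E) (g : VVDS F) : EReal :=
  liminf (fun σ : ℝ =>
    ((Real.log^[p] (g.Minv (f.M σ)) / Real.log^[q] σ : ℝ) : EReal)) atTop

/-- The (p,q)-th relative Ritt type of `f` with respect to `g`. -/
def relRittType (p q : ℕ) (f : VVDS E) (g : VVDS F) : EReal :=
  limsup (fun σ : ℝ =>
    ((Real.log^[p-1] (g.Minv (f.M σ)) /
      (Real.log^[q-1] σ) ^ (relRittOrder p q f g).toReal : ℝ) : EReal)) atTop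

/-- The (p,q)-th relative Ritt lower type of `f` with respect to `g`. -/
def relRittLowerType (p q : ℕ) (f : VVDS E) (g : VVDS F) : EReal :=
  liminf (fun σ : ℝ =>
    ((Real.log^[p-1] (g.Minv (f.M σ)) /
      (Real.log^[q-1] σ) ^ (relRittOrder p q f g).toReal : ℝ) : EReal)) atTop

/-- The (p,q)-th relative Ritt weak type of `f` with respect to `g`. -/
def relRittWeakType (p q : ℕ) (f : VVDS E) (g : VVDS F) : EReal :=
  liminf (fun σ : ℝ =>
    ((Real.log^[p-1] (g.Minv (f.M σ)) /
      (Real.log^[q-1] σ) ^ (relRittLowerOrder p q f g).toReal : ℝ) : EReal)) atTop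

/-- The growth indicator `τ̄_g^{(p,q)}(f)`. -/
def relRittUpperWeakType (p q : ℕ) (f : VVDS E) (g : VVDS F) : EReal :=
  limsup (fun σ : ℝ =>
    ((Real.log^[p-1] (g.Minv (f.M σ)) /
      (Real.log^[q-1] σ) ^ (relRittLowerOrder p q f g).toReal : ℝ) : EReal)) atTop

/-!
Put `y(σ) = M_g⁻¹(M_f(σ))`. Since `M_g(y(σ)) = M_f(σ)`, the ratio defining the `(m,q)`-order
of `f` relative to `h` at `σ` is the `(m,p)`-ratio of `g` relative to `h` at `y(σ) → ∞` times the
`(p,q)`-ratio of `f` relative to `g` at `σ`. Taking upper and lower limits gives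
`ρ_h(f) ≤ ρ_h(g) ρ_g(f)` and `ρ_g(f) λ_h(g) ≤ ρ_h(f)`; together with the same inequalities for
`f` and `g` exchanged, these give `ρ_g(f) ρ_f(g) ≥ 1`, with equality when `λ = ρ`.

The analytic input is that `M_f` is continuous (it is controlled by the majorant
`∑ e^{σλₙ} ‖aₙ‖`), nondecreasing (Hadamard's three lines theorem on strips whose left edge goes to
`-∞`, where the majorant vanishes), and tends to `+∞` unless `f ≡ 0` (Liouville), which a positive
lower order rules out.
-/
namespace VVDS

variable (f : VVDS E)

def majorant (σ : ℝ) : ℝ := ∑' n, Real.exp (σ * f.lam n) * ‖f.a n‖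

lemma summable_majorant (σ : ℝ) : Summable fun n => Real.exp (σ * f.lam n) * ‖f.a n‖ := by
  simpa using f.abs_conv σ

lemma exp_mul_lam_mul_norm_le {σ σ' : ℝ} (h : σ ≤ σ') (n : ℕ) :
    Real.exp (σ * f.lam n) * ‖f.a n‖ ≤ Real.exp (σ' * f.lam n) * ‖f.a n‖ := by
  gcongr
  exact (f.lam_pos n).le

lemma norm_exp_smul (s : ℂ) (n : ℕ) :
    ‖Complex.exp (s * f.lam n) • f.a n‖ = Real.exp (s.re * f.lam n) * ‖f.a n‖ := by
  simp [norm_smul, Complex.norm_exp]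

lemma summable_norm_exp_smul (s : ℂ) :
    Summable fun n => ‖Complex.exp (s * f.lam n) • f.a n‖ := by
  simpa only [f.norm_exp_smul] using f.summable_majorant s.re

lemma norm_toFun_le_majorant (s : ℂ) : ‖f.toFun s‖ ≤ f.majorant s.re :=
  (norm_tsum_le_tsum_norm (f.summable_norm_exp_smul s)).trans_eq
    (tsum_congr (f.norm_exp_smul s))

lemma majorant_nonneg (σ : ℝ) : 0 ≤ f.majorant σ :=
  tsum_nonneg fun _ => by positivity

lemma majorant_mono : Monotone f.majorant := fun _ _ h =>
  Summable.tsum_le_tsum (f.exp_mul_lam_mul_norm_le h) (f.summable_majorant _)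
    (f.summable_majorant _)

lemma majorant_le_exp_mul_majorant {σ σ' : ℝ} (h : σ ≤ σ') :
    f.majorant σ ≤ Real.exp ((σ - σ') * f.lam 0) * f.majorant σ' := by
  rw [majorant, majorant, ← tsum_mul_left]
  refine Summable.tsum_le_tsum (fun n => ?_) (f.summable_majorant σ)
    ((f.summable_majorant σ').mul_left _)
  rw [← mul_assoc, ← Real.exp_add]
  gcongr
  nlinarith [f.lam_strictMono.monotone (Nat.zero_le n)]

lemma tendsto_majorant_atBot : Tendsto f.majorant atBot (𝓝 0) := by
  have hexp : Tendsto (fun σ : ℝ => Real.exp (σ * f.lam 0) * f.majorant 0) atBot (𝓝 0) := by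
    simpa using (Real.tendsto_exp_atBot.comp
      (tendsto_id.atBot_mul_const (f.lam_pos 0))).mul_const (f.majorant 0)
  refine tendsto_of_tendsto_of_tendsto_of_le_of_le' tendsto_const_nhds hexp
    (Eventually.of_forall f.majorant_nonneg) ?_
  filter_upwards [eventually_le_atBot 0] with σ hσ
  simpa using f.majorant_le_exp_mul_majorant hσ

lemma continuous_majorant : Continuous f.majorant := by
  refine continuous_iff_continuousAt.2 fun σ => ?_
  have hcont : ContinuousOn f.majorant (Set.Iio (σ + 1)) :=
    continuousOn_tsum (fun n => by fun_prop) (f.summable_majorant (σ + 1)) fun n x hx => by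
      rw [Real.norm_of_nonneg (by positivity)]
      exact f.exp_mul_lam_mul_norm_le (le_of_lt hx) n
  exact hcont.continuousAt (Iio_mem_nhds (lt_add_one σ))

lemma differentiable_toFun : Differentiable ℂ f.toFun := by
  intro s
  have hU : IsOpen {z : ℂ | z.re < s.re + 1} := isOpen_lt Complex.continuous_re continuous_const
  have hd : DifferentiableOn ℂ f.toFun {z : ℂ | z.re < s.re + 1} :=
    Complex.differentiableOn_tsum_of_summable_norm (f.summable_majorant (s.re + 1))
      (fun n => by fun_prop) hU fun n z hz => by
        rw [f.norm_exp_smul]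
        exact f.exp_mul_lam_mul_norm_le (le_of_lt hz) n
  exact hd.differentiableAt (hU.mem_nhds (by simp))

lemma bddAbove_range_norm_toFun (σ : ℝ) :
    BddAbove (Set.range fun t : ℝ => ‖f.toFun (σ + t * Complex.I)‖) :=
  ⟨f.majorant σ, Set.forall_mem_range.2 fun t => by
    simpa using f.norm_toFun_le_majorant (σ + t * Complex.I)⟩

lemma norm_toFun_le_M (s : ℂ) : ‖f.toFun s‖ ≤ f.M s.re := by
  have := le_ciSup (f.bddAbove_range_norm_toFun s.re) s.im
  rwa [Complex.re_add_im] at this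

lemma M_nonneg (σ : ℝ) : 0 ≤ f.M σ :=
  (norm_nonneg _).trans (f.norm_toFun_le_M σ)

lemma M_le_majorant (σ : ℝ) : f.M σ ≤ f.majorant σ :=
  ciSup_le fun t => by simpa using f.norm_toFun_le_majorant (σ + t * Complex.I)

lemma M_le_M_add_M {σa σ σb : ℝ} (ha : σa < σ) (hb : σ ≤ σb) :
    f.M σ ≤ f.M σa + f.M σb := by
  refine ciSup_le fun t => ?_
  have hre : (σ + t * Complex.I : ℂ).re = σ := by simp
  set θ := (σ - σa) / (σb - σa)
  have hθ0 : 0 ≤ θ := div_nonneg (by linarith) (by linarith)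
  have hθ1 : θ ≤ 1 := (div_le_one (by linarith)).2 (by linarith)
  have hB : BddAbove ((norm ∘ f.toFun) '' Complex.HadamardThreeLines.verticalClosedStrip σa σb) :=
    ⟨f.majorant σb, Set.forall_mem_image.2 fun z hz =>
      (f.norm_toFun_le_majorant z).trans (f.majorant_mono hz.2)⟩
  have hedge : ∀ σ' : ℝ, ∀ z ∈ Complex.re ⁻¹' {σ'}, ‖f.toFun z‖ ≤ f.M σ' := fun σ' z hz =>
    (f.norm_toFun_le_M z).trans_eq (by rw [hz])
  have hthree := Complex.HadamardThreeLines.norm_le_interp_of_mem_verticalClosedStrip'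
    (ha.trans_le hb) (show _ ∈ Set.Icc σa σb by rw [hre]; exact ⟨ha.le, hb⟩)
    f.differentiable_toFun.diffContOnCl hB (hedge σa) (hedge σb)
  rw [hre] at hthree
  calc ‖f.toFun (σ + t * Complex.I)‖
      ≤ f.M σa ^ (1 - θ) * f.M σb ^ θ := hthree
    _ ≤ (1 - θ) * f.M σa + θ * f.M σb :=
        Real.geom_mean_le_arith_mean2_weighted (by linarith) hθ0 (f.M_nonneg σa)
          (f.M_nonneg σb) (by ring)
    _ ≤ f.M σa + f.M σb := by nlinarith [f.M_nonneg σa, f.M_nonneg σb]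

lemma monotone_M : Monotone f.M := by
  intro σ σ' h
  refine le_of_forall_pos_le_add fun ε hε => ?_
  obtain ⟨σa, hσa, hsmall⟩ :=
    ((eventually_lt_atBot σ).and (f.tendsto_majorant_atBot.eventually (gt_mem_nhds hε))).exists
  linarith [f.M_le_M_add_M hσa h, f.M_le_majorant σa]

lemma norm_exp_add_sub_exp (s : ℂ) {δ : ℝ} (hδ : 0 ≤ δ) (n : ℕ) :
    ‖Complex.exp ((s + δ) * f.lam n) - Complex.exp (s * f.lam n)‖ =
      Real.exp ((s.re + δ) * f.lam n) - Real.exp (s.re * f.lam n) := by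
  have hfactor : Complex.exp ((s + δ) * f.lam n) - Complex.exp (s * f.lam n) =
      Complex.exp (s * f.lam n) * ((Real.exp (δ * f.lam n) - 1 : ℝ) : ℂ) := by
    push_cast
    rw [mul_sub, ← Complex.exp_add]
    ring_nf
  have hexp : 0 ≤ Real.exp (δ * f.lam n) - 1 :=
    sub_nonneg.2 (Real.one_le_exp (mul_nonneg hδ (f.lam_pos n).le))
  rw [hfactor, norm_mul, Complex.norm_exp, Complex.norm_real, Real.norm_of_nonneg hexp,
    mul_sub, ← Real.exp_add]
  simp [add_mul]

lemma norm_toFun_add_sub_le (s : ℂ) {δ : ℝ} (hδ : 0 ≤ δ) :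
    ‖f.toFun (s + δ) - f.toFun s‖ ≤ f.majorant (s.re + δ) - f.majorant s.re := by
  have hterm : ∀ n, ‖Complex.exp ((s + δ) * f.lam n) • f.a n - Complex.exp (s * f.lam n) • f.a n‖
      = Real.exp ((s.re + δ) * f.lam n) * ‖f.a n‖ - Real.exp (s.re * f.lam n) * ‖f.a n‖ := by
    intro n
    rw [← sub_smul, norm_smul, f.norm_exp_add_sub_exp s hδ, sub_mul]
  rw [toFun, toFun,
    ← (f.summable_norm_exp_smul _).of_norm.tsum_sub (f.summable_norm_exp_smul s).of_norm]
  refine (norm_tsum_le_tsum_norm ?_).trans_eq ?_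
  · simpa only [hterm] using (f.summable_majorant (s.re + δ)).sub (f.summable_majorant s.re)
  · rw [tsum_congr hterm, (f.summable_majorant _).tsum_sub (f.summable_majorant _)]
    rfl

lemma M_add_le (σ : ℝ) {δ : ℝ} (hδ : 0 ≤ δ) :
    f.M (σ + δ) ≤ f.M σ + (f.majorant (σ + δ) - f.majorant σ) := by
  refine ciSup_le fun t => ?_
  have hshift : ((σ + δ : ℝ) : ℂ) + t * Complex.I = (σ + t * Complex.I) + δ := by push_cast; ring
  calc ‖f.toFun (((σ + δ : ℝ) : ℂ) + t * Complex.I)‖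
      ≤ ‖f.toFun (σ + t * Complex.I)‖ +
          ‖f.toFun ((σ + t * Complex.I) + δ) - f.toFun (σ + t * Complex.I)‖ := by
        rw [hshift]; exact norm_le_insert' _ _
    _ ≤ f.M σ + (f.majorant (σ + δ) - f.majorant σ) := by
        gcongr
        · simpa using f.norm_toFun_le_M (σ + t * Complex.I)
        · simpa using f.norm_toFun_add_sub_le (σ + t * Complex.I) hδ

lemma dist_M_le_dist_majorant (x y : ℝ) :
    dist (f.M x) (f.M y) ≤ dist (f.majorant x) (f.majorant y) := by
  wlog h : x ≤ y generalizing x y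
  · rw [dist_comm, dist_comm (f.majorant x)]
    exact this y x (le_of_not_ge h)
  have hM := f.M_add_le x (sub_nonneg.2 h)
  rw [add_sub_cancel] at hM
  rw [Real.dist_eq, Real.dist_eq, abs_sub_comm, abs_of_nonneg (sub_nonneg.2 (f.monotone_M h)),
    abs_sub_comm, abs_of_nonneg (sub_nonneg.2 (f.majorant_mono h))]
  linarith

lemma continuous_M : Continuous f.M :=
  Metric.continuous_iff.2 fun x ε hε =>
    (Metric.continuous_iff.1 f.continuous_majorant x ε hε).imp fun _ ⟨hδ, h⟩ =>
      ⟨hδ, fun y hy => (f.dist_M_le_dist_majorant y x).trans_lt (h y hy)⟩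

lemma toFun_eq_zero_of_not_tendsto_M (hM : ¬Tendsto f.M atTop atTop) (s : ℂ) :
    f.toFun s = 0 := by
  obtain ⟨b, hb⟩ : ∃ b, ∀ σ, f.M σ < b := by
    simpa [tendsto_atTop_atTop_iff_of_monotone f.monotone_M] using hM
  have hbdd : Bornology.IsBounded (Set.range f.toFun) := by
    refine (Metric.isBounded_iff_subset_closedBall 0).2 ⟨b, Set.range_subset_iff.2 fun z => ?_⟩
    simpa using ((f.norm_toFun_le_M z).trans (hb z.re).le)
  have hconst := f.differentiable_toFun.apply_eq_apply_of_bounded hbdd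
  refine norm_le_zero_iff.1 (ge_of_tendsto f.tendsto_majorant_atBot
    (Eventually.of_forall fun σ => ?_))
  simpa [hconst s σ] using f.norm_toFun_le_majorant σ

lemma M_eq_zero_of_not_tendsto_M (hM : ¬Tendsto f.M atTop atTop) (σ : ℝ) : f.M σ = 0 := by
  simp [M, f.toFun_eq_zero_of_not_tendsto_M hM]

/-- Here `{σ | 0 ≤ M σ}` is all of `ℝ`, whose `sInf` is `0` by convention. -/
lemma Minv_zero : f.Minv 0 = 0 := by
  simp [Minv, f.M_nonneg]

lemma bddBelow_setOf_le_M {y : ℝ} (hy : 0 < y) : BddBelow {σ | y ≤ f.M σ} := by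
  obtain ⟨σ₀, hσ₀⟩ := eventually_atBot.1 (f.tendsto_majorant_atBot.eventually (gt_mem_nhds hy))
  refine ⟨σ₀, fun σ hσ => le_of_not_gt fun hlt => ?_⟩
  linarith [f.M_le_majorant σ, hσ₀ σ hlt.le, show y ≤ f.M σ from hσ]

variable {f}

lemma M_Minv (hM : Tendsto f.M atTop atTop) {y : ℝ} (hy : 0 < y) : f.M (f.Minv y) = y := by
  have hne : {σ | y ≤ f.M σ}.Nonempty := (hM.eventually_ge_atTop y).exists
  have hbdd := f.bddBelow_setOf_le_M hy
  have hmem : y ≤ f.M (f.Minv y) :=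
    (isClosed_le continuous_const f.continuous_M).csInf_mem hne hbdd
  refine le_antisymm (le_of_tendsto (f.continuous_M.continuousAt.tendsto.mono_left
    (nhdsWithin_le_nhds (s := Set.Iio (f.Minv y)))) ?_) hmem
  filter_upwards [self_mem_nhdsWithin] with σ (hσ : σ < f.Minv y)
  exact le_of_lt (not_le.1 fun h => hσ.not_ge (csInf_le hbdd h))

lemma le_Minv_of_majorant_lt (hM : Tendsto f.M atTop atTop) {σ y : ℝ} (h : f.majorant σ < y) :
    σ ≤ f.Minv y :=
  le_csInf (hM.eventually_ge_atTop y).exists fun σ' (hσ' : y ≤ f.M σ') => le_of_not_gt fun hlt =>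
    by linarith [f.M_le_majorant σ', f.majorant_mono hlt.le]

lemma tendsto_Minv (hM : Tendsto f.M atTop atTop) : Tendsto f.Minv atTop atTop :=
  tendsto_atTop_atTop.2 fun b =>
    ⟨f.majorant b + 1, fun _ hy => le_Minv_of_majorant_lt hM (by linarith)⟩

end VVDS

lemma tendsto_iterate_log_atTop (k : ℕ) : Tendsto (Real.log^[k]) atTop atTop := by
  induction k with
  | zero => exact tendsto_id
  | succ k ih => rw [Function.iterate_succ']; exact Real.tendsto_log_atTop.comp ih

lemma iterate_log_zero (k : ℕ) : Real.log^[k] 0 = 0 :=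
  Function.iterate_fixed Real.log_zero k

def relRittRatio (p q : ℕ) (f : VVDS E) (g : VVDS F) (σ : ℝ) : ℝ :=
  Real.log^[p] (g.Minv (f.M σ)) / Real.log^[q] σ

lemma relRittOrder_eq_limsup_relRittRatio (p q : ℕ) (f : VVDS E) (g : VVDS F) :
    relRittOrder p q f g = limsup (fun σ => (relRittRatio p q f g σ : EReal)) atTop :=
  rfl

section RelativeOrders

variable {f : VVDS E} {g : VVDS F} {h : VVDS G} {p q m : ℕ}

lemma tendsto_M_atTop_of_relRittLowerOrder_pos (hf : 0 < relRittLowerOrder m q f h) :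
    Tendsto f.M atTop atTop := by
  by_contra hM
  refine hf.ne' ?_
  simp [relRittLowerOrder, f.M_eq_zero_of_not_tendsto_M hM, h.Minv_zero, iterate_log_zero]

lemma tendsto_Minv_comp_M (hfM : Tendsto f.M atTop atTop) (hgM : Tendsto g.M atTop atTop) :
    Tendsto (fun σ => g.Minv (f.M σ)) atTop atTop :=
  (VVDS.tendsto_Minv hgM).comp hfM

lemma eventually_relRittRatio_pos (hfM : Tendsto f.M atTop atTop)
    (hgM : Tendsto g.M atTop atTop) : ∀ᶠ σ in atTop, 0 < relRittRatio p q f g σ := by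
  filter_upwards [((tendsto_iterate_log_atTop p).comp
      (tendsto_Minv_comp_M hfM hgM)).eventually_gt_atTop 0,
    (tendsto_iterate_log_atTop q).eventually_gt_atTop 0] with σ hp hq
  exact div_pos hp hq

lemma relRittOrder_nonneg (hfM : Tendsto f.M atTop atTop) (hgM : Tendsto g.M atTop atTop) :
    0 ≤ relRittOrder p q f g :=
  le_limsup_of_frequently_le ((eventually_relRittRatio_pos hfM hgM).mono
    fun _ h => EReal.coe_nonneg.2 h.le).frequently

lemma eventually_relRittRatio_eq_mul (hfM : Tendsto f.M atTop atTop)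
    (hgM : Tendsto g.M atTop atTop) : ∀ᶠ σ in atTop,
      relRittRatio m q f h σ = relRittRatio m p g h (g.Minv (f.M σ)) * relRittRatio p q f g σ := by
  filter_upwards [((tendsto_iterate_log_atTop p).comp
      (tendsto_Minv_comp_M hfM hgM)).eventually_gt_atTop 0,
    hfM.eventually_gt_atTop 0] with σ hp hpos
  simp only [relRittRatio, VVDS.M_Minv hgM hpos, Function.comp_apply] at hp ⊢
  field_simp

lemma relRittOrder_eq_limsup_mul (hfM : Tendsto f.M atTop atTop)
    (hgM : Tendsto g.M atTop atTop) :
    relRittOrder m q f h = limsup ((fun σ => (relRittRatio m p g h (g.Minv (f.M σ)) : EReal)) *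
      fun σ => (relRittRatio p q f g σ : EReal)) atTop := by
  rw [relRittOrder_eq_limsup_relRittRatio]
  exact limsup_congr ((eventually_relRittRatio_eq_mul hfM hgM).mono fun σ hσ => by
    rw [Pi.mul_apply, hσ, EReal.coe_mul])

lemma relRittOrder_le_mul (hfM : Tendsto f.M atTop atTop) (hg : 0 < relRittLowerOrder m p g h)
    (hg' : relRittOrder m p g h ≠ ⊤) :
    relRittOrder m q f h ≤ relRittOrder m p g h * relRittOrder p q f g := by
  have hgM := tendsto_M_atTop_of_relRittLowerOrder_pos hg
  have hy := tendsto_Minv_comp_M hfM hgM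
  set u : ℝ → EReal := fun σ => relRittRatio m p g h (g.Minv (f.M σ))
  have hu0 : ∀ᶠ σ in atTop, 0 ≤ u σ :=
    (hy.eventually (eventually_lt_of_lt_liminf hg)).mono fun _ h => h.le
  have hv0 : ∀ᶠ σ in atTop, (0 : EReal) ≤ relRittRatio p q f g σ :=
    (eventually_relRittRatio_pos hfM hgM).mono fun _ h => EReal.coe_nonneg.2 h.le
  have hu_le : limsup u atTop ≤ relRittOrder m p g h :=
    hy.limsup_comp_le_limsup (u := fun s => (relRittRatio m p g h s : EReal))
  have hu_pos : 0 < limsup u atTop :=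
    hg.trans_le ((hy.liminf_le_liminf_comp (u := fun s => (relRittRatio m p g h s : EReal))).trans
      liminf_le_limsup)
  calc relRittOrder m q f h = limsup (u * fun σ => (relRittRatio p q f g σ : EReal)) atTop :=
        relRittOrder_eq_limsup_mul hfM hgM
    _ ≤ limsup u atTop * relRittOrder p q f g :=
        EReal.limsup_mul_le hu0.frequently hv0 (.inl hu_pos.ne')
          (.inl (hu_le.trans_lt hg'.lt_top).ne)
    _ ≤ relRittOrder m p g h * relRittOrder p q f g :=
        mul_le_mul_of_nonneg_right hu_le (relRittOrder_nonneg hfM hgM)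

lemma relRittOrder_mul_relRittLowerOrder_le (hfM : Tendsto f.M atTop atTop)
    (hg : 0 < relRittLowerOrder m p g h) :
    relRittOrder p q f g * relRittLowerOrder m p g h ≤ relRittOrder m q f h := by
  have hgM := tendsto_M_atTop_of_relRittLowerOrder_pos hg
  have hy := tendsto_Minv_comp_M hfM hgM
  set u : ℝ → EReal := fun σ => relRittRatio m p g h (g.Minv (f.M σ))
  have hu0 : ∀ᶠ σ in atTop, 0 ≤ u σ :=
    (hy.eventually (eventually_lt_of_lt_liminf hg)).mono fun _ h => h.le
  have hv0 : ∀ᶠ σ in atTop, (0 : EReal) ≤ relRittRatio p q f g σ :=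
    (eventually_relRittRatio_pos hfM hgM).mono fun _ h => EReal.coe_nonneg.2 h.le
  calc relRittOrder p q f g * relRittLowerOrder m p g h ≤ relRittOrder p q f g * liminf u atTop :=
        mul_le_mul_of_nonneg_left
          (hy.liminf_le_liminf_comp (u := fun s => (relRittRatio m p g h s : EReal)))
          (relRittOrder_nonneg hfM hgM)
    _ ≤ limsup ((fun σ => (relRittRatio p q f g σ : EReal)) * u) atTop :=
        EReal.le_limsup_mul hv0.frequently hu0
    _ = relRittOrder m q f h := by
        rw [mul_comm]; exact (relRittOrder_eq_limsup_mul hfM hgM).symm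

end RelativeOrders

namespace EReal

lemma div_mul_div_self {a b : EReal} (ha : 0 < a) (ha' : a ≠ ⊤) (hb : 0 < b) (hb' : b ≠ ⊤) :
    a / b * (b / a) = 1 := by
  lift a to ℝ using ⟨ha', ha.ne_bot⟩
  lift b to ℝ using ⟨hb', hb.ne_bot⟩
  have hab : a / b * (b / a) = 1 := by
    have ha₀ : a ≠ 0 := by exact_mod_cast ha.ne'
    have hb₀ : b ≠ 0 := by exact_mod_cast hb.ne'
    field_simp
  rw [← coe_div, ← coe_div, ← coe_mul, hab, coe_one]

lemma one_le_mul_of_le_mul {a b x y : EReal} (ha : 0 < a) (ha' : a ≠ ⊤) (hb : 0 < b)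
    (hb' : b ≠ ⊤) (hx : a ≤ b * x) (hy : b ≤ a * y) : 1 ≤ x * y := by
  have hx' : a / b ≤ x := (div_le_iff_le_mul hb hb').2 hx
  have hy' : b / a ≤ y := (div_le_iff_le_mul ha ha').2 hy
  calc 1 = a / b * (b / a) := (div_mul_div_self ha ha' hb hb').symm
    _ ≤ x * y := mul_le_mul hx' hy' (div_nonneg hb.le ha.le) ((div_nonneg ha.le hb.le).trans hx')

lemma mul_le_one_of_mul_le {a b x y : EReal} (ha : 0 < a) (ha' : a ≠ ⊤) (hb : 0 < b)
    (hb' : b ≠ ⊤) (hy₀ : 0 ≤ y) (hx : x * b ≤ a) (hy : y * a ≤ b) : x * y ≤ 1 := by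
  have hx' : x ≤ a / b := (le_div_iff_mul_le hb hb').2 hx
  have hy' : y ≤ b / a := (le_div_iff_mul_le ha ha').2 hy
  calc x * y ≤ a / b * (b / a) := mul_le_mul hx' hy' hy₀ (div_nonneg ha.le hb.le)
    _ = 1 := div_mul_div_self ha ha' hb hb'

end EReal

theorem stmt_5_general (f : VVDS E) (g : VVDS F) (h : VVDS G) (p q m : ℕ)
    (hf1 : (0 : EReal) < relRittLowerOrder m q f h)
    (hf3 : relRittOrder m q f h < ⊤)
    (hg1 : (0 : EReal) < relRittLowerOrder m p g h)
    (hg3 : relRittOrder m p g h < ⊤)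
    :
    1 ≤ relRittOrder p q f g * relRittOrder q p g f ∧ (relRittLowerOrder m q f h = relRittOrder m q f h → relRittLowerOrder m p g h = relRittOrder m p g h → relRittOrder p q f g * relRittOrder q p g f = 1) := by
  have hfM := tendsto_M_atTop_of_relRittLowerOrder_pos hf1
  have hgM := tendsto_M_atTop_of_relRittLowerOrder_pos hg1
  have hf0 : 0 < relRittOrder m q f h := hf1.trans_le liminf_le_limsup
  have hg0 : 0 < relRittOrder m p g h := hg1.trans_le liminf_le_limsup
  have hlower : 1 ≤ relRittOrder p q f g * relRittOrder q p g f :=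
    EReal.one_le_mul_of_le_mul hf0 hf3.ne hg0 hg3.ne (relRittOrder_le_mul hfM hg1 hg3.ne)
      (relRittOrder_le_mul hgM hf1 hf3.ne)
  refine ⟨hlower, fun hf hg => le_antisymm ?_ hlower⟩
  refine EReal.mul_le_one_of_mul_le hf0 hf3.ne hg0 hg3.ne (relRittOrder_nonneg hgM hfM) ?_ ?_
  · rw [← hg]; exact relRittOrder_mul_relRittLowerOrder_le hfM hg1
  · rw [← hf]; exact relRittOrder_mul_relRittLowerOrder_le hgM hf1

theorem stmt_5 (f : VVDS E) (g : VVDS F) (h : VVDS G) (p q m : ℕ)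
    (hf1 : (0 : EReal) < relRittLowerOrder m q f h)
    (hf2 : relRittLowerOrder m q f h ≤ relRittOrder m q f h)
    (hf3 : relRittOrder m q f h < ⊤)
    (hg1 : (0 : EReal) < relRittLowerOrder m p g h)
    (hg2 : relRittLowerOrder m p g h ≤ relRittOrder m p g h)
    (hg3 : relRittOrder m p g h < ⊤)
    :
    1 ≤ relRittOrder p q f g * relRittOrder q p g f ∧ (relRittLowerOrder m q f h = relRittOrder m q f h → relRittLowerOrder m p g h = relRittOrder m p g h → relRittOrder p q f g * relRittOrder q p g f = 1) :=
  stmt_5_general f g h p q m hf1 hf3 hg1 hg3
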